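/- arXiv:2405.16768 — 5 statements merged into one kernel-verified Lean document; each statement's English description precedes it below -/
import Mathlib

section
/- Let 0 < R < H, a = √(H² − R²), and α = R/(H + a). For every z ∈ ℂ with |z + i·H| = R, one has |(z + i·a)/(z − i·a)| = α. (The forward conformal map sends the tunnel periphery onto the inner circle of radius α of the mapping annulus.) -/
open Complex

/-! The points `±ia` are mutually inverse with respect to the periphery `|z + iH| = R`
(since `a² = H² − R²`), so the periphery is an Apollonius circle for them: on it
`|z + ia| / |z − ia|` is constant, and evaluating at the top point `z = (R − H)i` gives
`(H − a)/R = R/(H + a)`. Algebraically this is the identity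
`|z + ia|² (H + a) − |z − ia|² (H − a) = 2a (|z + iH|² − H² + a²)`. -/

lemma norm_add_I_mul_sq_mul_sub_norm_sub_I_mul_sq_mul (z : ℂ) (a H : ℝ) :
    ‖z + I * a‖ ^ 2 * (H + a) - ‖z - I * a‖ ^ 2 * (H - a) =
      2 * a * (‖z + I * H‖ ^ 2 - H ^ 2 + a ^ 2) := by
  simp only [Complex.sq_norm, normSq_apply, add_re, add_im, sub_re, sub_im, mul_re, mul_im, I_re, I_im,
    ofReal_re, ofReal_im]
  ring

lemma norm_add_I_mul_mul_eq_of_sq_add_sq {z : ℂ} {a H : ℝ} (hH : 0 ≤ H + a)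
    (hz : a ^ 2 + ‖z + I * H‖ ^ 2 = H ^ 2) :
    ‖z + I * a‖ * (H + a) = ‖z + I * H‖ * ‖z - I * a‖ := by
  have hsq : ‖z + I * a‖ ^ 2 * (H + a) = ‖z - I * a‖ ^ 2 * (H - a) := by
    linear_combination norm_add_I_mul_sq_mul_sub_norm_sub_I_mul_sq_mul z a H + 2 * a * hz
  refine (pow_left_inj₀ (by positivity) (by positivity) two_ne_zero).mp ?_
  linear_combination (H + a) * hsq - ‖z - I * a‖ ^ 2 * hz

lemma sub_I_mul_ne_zero_of_norm_lt {z : ℂ} {a H : ℝ} (h : ‖z + I * H‖ < H + a) :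
    z - I * a ≠ 0 := by
  intro hza
  rw [sub_eq_zero.mp hza, ← mul_add, norm_mul, norm_I, one_mul, ← ofReal_add, norm_real,
    Real.norm_eq_abs] at h
  linarith [le_abs_self (a + H)]

theorem tunnel_periphery_maps_to_inner_circle_general (R H : ℝ) (hRH : R < H)
    (a α : ℝ) (ha : a = Real.sqrt (H ^ 2 - R ^ 2)) (hα : α = R / (H + a)) :
    ∀ z : ℂ, ‖z + Complex.I * H‖ = R →
      ‖(z + Complex.I * a) / (z - Complex.I * a)‖ = α := by
  intro z hz
  have hR : 0 ≤ R := hz ▸ norm_nonneg _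
  have ha_nonneg : 0 ≤ a := ha ▸ Real.sqrt_nonneg _
  have ha_sq : a ^ 2 + R ^ 2 = H ^ 2 := by
    rw [ha, Real.sq_sqrt (by nlinarith)]
    ring
  have hRHa : R < H + a := by linarith
  have hza : ‖z - I * a‖ ≠ 0 := norm_ne_zero_iff.mpr (sub_I_mul_ne_zero_of_norm_lt (hz ▸ hRHa))
  rw [norm_div, hα, div_eq_div_iff hza (by linarith), ← hz]
  exact norm_add_I_mul_mul_eq_of_sq_add_sq (by linarith) (hz ▸ ha_sq)

/-- The forward Verruijt conformal map `ζ(z) = (z + ia)/(z − ia)` sends the tunnel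
periphery `{|z + iH| = R}` onto the inner circle of radius `α = R/(H + √(H² − R²))`
of the mapping annulus, where `a = √(H² − R²)` and `0 < R < H`. -/
theorem tunnel_periphery_maps_to_inner_circle (R H : ℝ) (hR : 0 < R) (hRH : R < H)
    (a α : ℝ) (ha : a = Real.sqrt (H ^ 2 - R ^ 2)) (hα : α = R / (H + a)) :
    ∀ z : ℂ, ‖z + Complex.I * H‖ = R →
      ‖(z + Complex.I * a) / (z - Complex.I * a)‖ = α :=
  tunnel_periphery_maps_to_inner_circle_general R H hRH a α ha hα
end

section
/- Let 0 < R < H, a = √(H² − R²), and α = R/(H + a). The map z ↦ (z + i·a)/(z − i·a) is a bijection from the remaining geomaterial region {z ∈ ℂ : Im z ≤ 0 and R ≤ |z + i·H|} onto the punctured closed annulus {ζ ∈ ℂ : α ≤ |ζ| ≤ 1 and ζ ≠ 1}. -/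
/-!
The map is the Möbius transformation `z ↦ (z + w)/(z − w)` with `w = ia`, whose inverse is
`ζ ↦ w(ζ + 1)/(ζ − 1)`; it sends `∞` to `1` and so is a bijection `ℂ \ {w} → ℂ \ {1}`. It then
suffices to identify the preimages of the two boundary circles. Since
`|z + ia|² − |z − ia|² = 4a Im z`, the unit disk pulls back to the lower half-plane. Since
`α² = (H − a)/(H + a)` and `a² + R² = H²`, one has the Apollonius identity
`|z + ia|² − α²|z − ia|² = (1 − α²)(|z + iH|² − R²)`, so `|ζ| ≥ α` pulls back to the exterior of the
tunnel.
-/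

open Complex

noncomputable def mobiusCayley (w z : ℂ) : ℂ := (z + w) / (z - w)

noncomputable def mobiusCayleyInv (w ζ : ℂ) : ℂ := w * (ζ + 1) / (ζ - 1)

section Mobius

variable {w : ℂ}

theorem mobiusCayley_ne_one (hw : w ≠ 0) (z : ℂ) : mobiusCayley w z ≠ 1 := by
  rcases eq_or_ne z w with rfl | hz
  · simp [mobiusCayley] -- at the pole the value is the junk `x / 0 = 0`
  · rw [mobiusCayley, Ne, div_eq_one_iff_eq (sub_ne_zero.2 hz)]
    intro h
    exact hw (by linear_combination h / 2)

theorem mobiusCayleyInv_ne (hw : w ≠ 0) (ζ : ℂ) : mobiusCayleyInv w ζ ≠ w := by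
  rcases eq_or_ne ζ 1 with rfl | hζ
  · simpa [mobiusCayleyInv] using hw.symm
  · rw [mobiusCayleyInv, Ne, div_eq_iff (sub_ne_zero.2 hζ)]
    intro h
    exact hw (by linear_combination h / 2)

theorem mobiusCayleyInv_mobiusCayley (hw : w ≠ 0) {z : ℂ} (hz : z ≠ w) :
    mobiusCayleyInv w (mobiusCayley w z) = z := by
  have hzw : z - w ≠ 0 := sub_ne_zero.2 hz
  have hone : mobiusCayley w z - 1 ≠ 0 := sub_ne_zero.2 (mobiusCayley_ne_one hw z)
  rw [mobiusCayleyInv, div_eq_iff hone, mobiusCayley]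
  field_simp
  ring

theorem mobiusCayley_mobiusCayleyInv (hw : w ≠ 0) {ζ : ℂ} (hζ : ζ ≠ 1) :
    mobiusCayley w (mobiusCayleyInv w ζ) = ζ := by
  have hζ1 : ζ - 1 ≠ 0 := sub_ne_zero.2 hζ
  have hden : mobiusCayleyInv w ζ - w ≠ 0 := sub_ne_zero.2 (mobiusCayleyInv_ne hw ζ)
  rw [mobiusCayley, div_eq_iff hden, mobiusCayleyInv]
  field_simp
  ring

theorem mobiusCayley_bijOn {s t : Set ℂ} (hw : w ≠ 0) (hs : ∀ z ∈ s, z ≠ w)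
    (ht : ∀ ζ ∈ t, ζ ≠ 1) (hst : ∀ z, z ≠ w → (z ∈ s ↔ mobiusCayley w z ∈ t)) :
    Set.BijOn (mobiusCayley w) s t := by
  refine Set.InvOn.bijOn (f' := mobiusCayleyInv w) ⟨?_, ?_⟩ ?_ ?_
  · exact fun z hz => mobiusCayleyInv_mobiusCayley hw (hs z hz)
  · exact fun ζ hζ => mobiusCayley_mobiusCayleyInv hw (ht ζ hζ)
  · exact fun z hz => (hst z (hs z hz)).1 hz
  · intro ζ hζ
    refine (hst _ (mobiusCayleyInv_ne hw ζ)).2 ?_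
    rwa [mobiusCayley_mobiusCayleyInv hw (ht ζ hζ)]

end Mobius

theorem sq_norm_add_I_mul (z : ℂ) (b : ℝ) : ‖z + I * b‖ ^ 2 = z.re ^ 2 + (z.im + b) ^ 2 := by
  rw [Complex.sq_norm, normSq_apply, add_re, add_im, I_mul_re, I_mul_im, ofReal_re, ofReal_im]
  ring

theorem sq_norm_sub_I_mul (z : ℂ) (b : ℝ) : ‖z - I * b‖ ^ 2 = z.re ^ 2 + (z.im - b) ^ 2 := by
  rw [Complex.sq_norm, normSq_apply, sub_re, sub_im, I_mul_re, I_mul_im, ofReal_re, ofReal_im]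
  ring

section Preimages

variable {a : ℝ} {z : ℂ}

theorem norm_mobiusCayley_le_one_iff (ha : 0 < a) (hz : z ≠ I * a) :
    ‖mobiusCayley (I * a) z‖ ≤ 1 ↔ z.im ≤ 0 := by
  rw [mobiusCayley, norm_div, div_le_one (norm_pos_iff.2 (sub_ne_zero.2 hz)),
    ← sq_le_sq₀ (norm_nonneg _) (norm_nonneg _), sq_norm_add_I_mul, sq_norm_sub_I_mul]
  constructor <;> intro h <;> nlinarith

theorem le_norm_mobiusCayley_iff {R H α : ℝ} (hR : 0 ≤ R) (hα : 0 ≤ α) (hα1 : α < 1)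
    (hpyth : a ^ 2 + R ^ 2 = H ^ 2) (hαsq : α ^ 2 * (H + a) = H - a) (hz : z ≠ I * a) :
    α ≤ ‖mobiusCayley (I * a) z‖ ↔ R ≤ ‖z + I * H‖ := by
  have apollonius : ‖z + I * a‖ ^ 2 - α ^ 2 * ‖z - I * a‖ ^ 2 =
      (1 - α ^ 2) * (‖z + I * H‖ ^ 2 - R ^ 2) := by
    rw [sq_norm_add_I_mul, sq_norm_sub_I_mul, sq_norm_add_I_mul]
    linear_combination (2 * z.im) * hαsq + (1 - α ^ 2) * hpyth
  have hα2 : 0 < 1 - α ^ 2 := by nlinarith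
  rw [mobiusCayley, norm_div, le_div_iff₀ (norm_pos_iff.2 (sub_ne_zero.2 hz)),
    ← sq_le_sq₀ (by positivity) (norm_nonneg _), ← sq_le_sq₀ hR (norm_nonneg _), mul_pow,
    ← sub_nonneg, apollonius, mul_nonneg_iff_of_pos_left hα2, sub_nonneg]

end Preimages

theorem verruijt_alpha_sq {R H a : ℝ} (hpyth : a ^ 2 + R ^ 2 = H ^ 2) (hHa : 0 < H + a) :
    (R / (H + a)) ^ 2 * (H + a) = H - a := by
  field_simp
  linear_combination hpyth

/-- The forward Verruijt conformal map `z ↦ (z + ia)/(z − ia)` is a bijection from the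
remaining geomaterial region `{Im z ≤ 0, R ≤ |z + iH|}` onto the punctured closed annulus
`{α ≤ |ζ| ≤ 1, ζ ≠ 1}`, where `0 < R < H`, `a = √(H² − R²)` and `α = R/(H + a)`. -/
theorem remaining_geomaterial_bijects_annulus (R H : ℝ) (hR : 0 < R) (hRH : R < H)
    (a α : ℝ) (ha : a = Real.sqrt (H ^ 2 - R ^ 2)) (hα : α = R / (H + a)) :
    Set.BijOn (fun z : ℂ => (z + Complex.I * a) / (z - Complex.I * a))
      {z : ℂ | z.im ≤ 0 ∧ R ≤ ‖z + Complex.I * H‖}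
      {ζ : ℂ | α ≤ ‖ζ‖ ∧ ‖ζ‖ ≤ 1 ∧ ζ ≠ 1} := by
  have hH2R2 : 0 < H ^ 2 - R ^ 2 := by nlinarith
  have hpyth : a ^ 2 + R ^ 2 = H ^ 2 := by rw [ha, Real.sq_sqrt hH2R2.le]; ring
  have ha0 : 0 < a := ha ▸ Real.sqrt_pos.2 hH2R2
  have hHa : 0 < H + a := by linarith
  have hα0 : 0 < α := hα ▸ div_pos hR hHa
  have hα1 : α < 1 := by rw [hα, div_lt_one hHa]; linarith
  have hw : I * (a : ℂ) ≠ 0 := mul_ne_zero I_ne_zero (ofReal_ne_zero.2 ha0.ne')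
  refine mobiusCayley_bijOn hw ?_ (fun ζ hζ => hζ.2.2) fun z hz => ?_
  · rintro z ⟨him, -⟩ rfl
    rw [I_mul_im, ofReal_re] at him
    linarith
  · simp only [Set.mem_ofPred_eq, ← norm_mobiusCayley_le_one_iff ha0 hz,
      ← le_norm_mobiusCayley_iff hR.le hα0.le hα1 hpyth (hα ▸ verruijt_alpha_sq hpyth hHa) hz,
      mobiusCayley_ne_one hw z, ne_eq, not_false_eq_true, and_true]
    exact and_comm
end

section
/- Let G∞ > 0, G_E > 0 and η_E > 0 be real. Define G(t) = G∞ + G_E·exp(−(G_E/η_E)·t) and H_c(t) = (1/η_E)·(G_E/(G_E + G∞))²·exp(−(G_E/(G_E + G∞))·(G∞/η_E)·t). Then for every t ≥ 0: ∫₀ᵗ H_c(t − τ)·G(τ) dτ + G(t)/(G_E + G∞) = 1. (This is the statement that the kernel H of Eq. (2.16), consisting of the continuous part H_c plus the Dirac-delta part δ(t)/(G_E + G∞), satisfies H ∗ G ≡ 1, i.e. H is the inverse Laplace transform of 1/(T·Ĝ(T)).) -/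
/-!
The convolution of two exponentials is elementary, so the integral can be evaluated in closed
form. With `κ = G_E/(G_E + G∞)`, both coefficients it produces equal `-κ`, so the integral
collapses to `κ(1 - exp(-(G_E/η_E) t))`; adding `G(t)/(G_E + G∞)` leaves
`κ + G∞/(G_E + G∞) = 1`.
-/

open Real intervalIntegral

theorem integral_exp_mul_of_ne_zero (k t : ℝ) (hk : k ≠ 0) :
    ∫ τ in (0:ℝ)..t, exp (k * τ) = (exp (k * t) - 1) / k := by
  rw [integral_comp_mul_left exp hk, integral_exp, mul_zero, exp_zero, smul_eq_mul,
    inv_mul_eq_div]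

theorem integral_exp_conv_exp (r s t : ℝ) (hrs : r ≠ s) :
    ∫ τ in (0:ℝ)..t, exp (r * (t - τ)) * exp (s * τ) = (exp (s * t) - exp (r * t)) / (s - r) := by
  have hsplit : ∀ τ, exp (r * (t - τ)) * exp (s * τ) = exp (r * t) * exp ((s - r) * τ) := by
    intro τ
    rw [← exp_add, ← exp_add]
    ring_nf
  simp_rw [hsplit]
  rw [integral_const_mul, integral_exp_mul_of_ne_zero _ _ (sub_ne_zero.2 hrs.symm), mul_div_assoc',
    mul_sub, ← exp_add, mul_one]
  ring_nf

theorem integral_exp_conv_const_add_exp (c p q r s t : ℝ) (hr : r ≠ 0) (hrs : r ≠ s) :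
    ∫ τ in (0:ℝ)..t, c * exp (r * (t - τ)) * (p + q * exp (s * τ)) =
      c * (p * ((exp (r * t) - 1) / r) + q * ((exp (s * t) - exp (r * t)) / (s - r))) := by
  have hsplit : ∀ τ, c * exp (r * (t - τ)) * (p + q * exp (s * τ)) =
      c * p * (exp (r * (t - τ)) * exp (0 * τ)) + c * q * (exp (r * (t - τ)) * exp (s * τ)) := by
    intro τ
    rw [zero_mul, exp_zero]
    ring
  have hint : ∀ u, IntervalIntegrable (fun τ => exp (r * (t - τ)) * exp (u * τ))
      MeasureTheory.volume 0 t :=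
    fun u => Continuous.intervalIntegrable (by fun_prop) _ _
  simp_rw [hsplit]
  rw [integral_add ((hint 0).const_mul _) ((hint s).const_mul _), integral_const_mul,
    integral_const_mul, integral_exp_conv_exp _ _ _ hr, integral_exp_conv_exp _ _ _ hrs,
    zero_mul, exp_zero, zero_sub, div_neg, ← neg_div, neg_sub]
  ring

/-- The creep kernel `H` of Eq. (2.16) (continuous part `H_c` plus Dirac-delta part
`δ(t)/(G_E + G∞)`) satisfies `H ∗ G ≡ 1` for the Poyting–Thomson relaxation modulus
`G(t) = G∞ + G_E exp(−(G_E/η_E) t)`: for every `t ≥ 0`,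
`∫₀ᵗ H_c(t − τ) G(τ) dτ + G(t)/(G_E + G∞) = 1`. -/
theorem creep_kernel_convolution (Ginf GE ηE : ℝ)
    (hGinf : 0 < Ginf) (hGE : 0 < GE) (hη : 0 < ηE) :
    ∀ t : ℝ, 0 ≤ t →
      (∫ τ in (0:ℝ)..t,
        (1 / ηE) * (GE / (GE + Ginf)) ^ 2 *
          Real.exp (-(GE / (GE + Ginf)) * (Ginf / ηE) * (t - τ)) *
          (Ginf + GE * Real.exp (-(GE / ηE) * τ)))
        + (Ginf + GE * Real.exp (-(GE / ηE) * t)) / (GE + Ginf) = 1 := by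
  intro t _
  have hrate_sub :
      -(GE / ηE) - -(GE / (GE + Ginf)) * (Ginf / ηE) = -(GE / (GE + Ginf) * (GE / ηE)) := by
    field_simp
    ring
  have hrate_ne : -(GE / (GE + Ginf)) * (Ginf / ηE) ≠ -(GE / ηE) := by
    rw [← sub_ne_zero, ← neg_sub, hrate_sub, neg_neg]
    positivity
  have hrate : -(GE / (GE + Ginf)) * (Ginf / ηE) ≠ 0 := by
    rw [neg_mul, neg_ne_zero]
    positivity
  rw [integral_exp_conv_const_add_exp _ _ _ _ _ _ hrate hrate_ne, hrate_sub]
  field_simp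
  ring
end

section
/- Let κ > 0 be real and z_c ∈ ℂ. Then the function z ↦ ‖log(conj(z) − conj(z_c)) + κ·log(z − conj(z_c))‖, where log denotes the principal complex logarithm, tends to +∞ along the cobounded filter on ℂ (i.e. as ‖z‖ → ∞). (The logarithmic terms in the first line of the time-accumulative displacement of Eq. (2.19) produce a unique displacement singularity at infinity, so the traditional complex potentials with free ground surface violate the tunnel engineering fact of bounded far-field displacement.) -/
open Complex Filter Bornology ComplexConjugate

/-! The real part of the expression is `log ‖z - z_c‖ + κ log ‖z - conj z_c‖`, a positive
combination of logarithms of distances to fixed points, so it tends to `+∞` as `‖z‖ → ∞`;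
the norm dominates the real part. -/

theorem tendsto_log_norm_sub_cobounded {E : Type*} [SeminormedAddCommGroup E] (c : E) :
    Tendsto (fun z => Real.log ‖z - c‖) (cobounded E) atTop :=
  Real.tendsto_log_atTop.comp (tendsto_norm_cobounded_atTop.comp (tendsto_sub_const_cobounded c))

theorem re_log_conj_sub_add_ofReal_mul_log (κ : ℝ) (z a b : ℂ) :
    (log (conj z - conj a) + κ * log (z - b)).re = Real.log ‖z - a‖ + κ * Real.log ‖z - b‖ := by
  rw [← map_sub, add_re, re_ofReal_mul, log_re, log_re, norm_conj]

/-- The logarithmic terms in the first line of the time-accumulative displacement of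
Eq. (2.19) produce a unique displacement singularity at infinity: for `κ > 0` and any
`z_c ∈ ℂ`, the norm of `log(conj z − conj z_c) + κ·log(z − conj z_c)` tends to `+∞`
as `‖z‖ → ∞`. -/
theorem log_terms_displacement_singularity (κ : ℝ) (hκ : 0 < κ) (zc : ℂ) :
    Filter.Tendsto
      (fun z : ℂ =>
        ‖Complex.log (starRingEnd ℂ z - starRingEnd ℂ zc) +
          (κ : ℂ) * Complex.log (z - starRingEnd ℂ zc)‖)
      (Bornology.cobounded ℂ) Filter.atTop := by
  have hre : Tendsto (fun z : ℂ => Real.log ‖z - zc‖ + κ * Real.log ‖z - conj zc‖)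
      (cobounded ℂ) atTop :=
    (tendsto_log_norm_sub_cobounded zc).atTop_add_atTop
      ((tendsto_log_norm_sub_cobounded _).const_mul_atTop hκ)
  refine tendsto_atTop_mono (fun z => ?_) hre
  rw [← re_log_conj_sub_add_ofReal_mul_log]
  exact re_le_norm _
end

section
/- Let a > 0 be real, 0 < α < 1, and σ ∈ ℂ with |σ| = 1. Define z(ζ) = −i·a·(1 + ζ)/(1 − ζ) and z′(ζ) = −2·i·a/(1 − ζ)². Then the series with terms (1 − α²)²·α^k·σ^k (k = 0, 1, 2, …) has sum (z(σ/α) − z(α·σ))/conj(z′(α·σ)) + (1 − α²)·α·σ^{−1}. Equivalently, the Laurent coefficients e_k of (z(α^{−1}σ) − z(ασ))/conj(z′(ασ)) on the unit circle are e_{−1} = −(1 − α²)·α, e_k = (1 − α²)²·α^k for k ≥ 0, and e_{−k} = 0 for k ≥ 2. (Eq. (4.7).) -/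
open Complex

/-- The backward Verruijt conformal mapping `z(ζ) = −ia(1 + ζ)/(1 − ζ)`. -/
noncomputable def zmap (a : ℝ) (ζ : ℂ) : ℂ := -Complex.I * a * (1 + ζ) / (1 - ζ)

/-- Its derivative `z′(ζ) = −2ia/(1 − ζ)²`. -/
noncomputable def zmap' (a : ℝ) (ζ : ℂ) : ℂ := -2 * Complex.I * a / (1 - ζ) ^ 2

/-!
On the unit circle `conj σ = σ⁻¹`, so `conj z′(ασ) = 2iaσ²/(σ − α)²`, while the Möbius map `z`
gives `z(σ/α) − z(ασ) = 2iaσ(1 − α²)/((σ − α)(1 − ασ))`. Their quotient plus `(1 − α²)α/σ`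
collapses to `(1 − α²)²/(1 − ασ)`, which is a geometric series since `|ασ| = α < 1`.
-/

open ComplexConjugate

namespace Verruijt

theorem zmap_sub_zmap (a : ℝ) {ζ ξ : ℂ} (hζ : ζ ≠ 1) (hξ : ξ ≠ 1) :
    zmap a ζ - zmap a ξ = -2 * I * a * (ζ - ξ) / ((1 - ζ) * (1 - ξ)) := by
  have hζ' : 1 - ζ ≠ 0 := sub_ne_zero.mpr hζ.symm
  have hξ' : 1 - ξ ≠ 0 := sub_ne_zero.mpr hξ.symm
  unfold zmap
  field_simp
  ring

theorem conj_zmap' (a : ℝ) (ζ : ℂ) : conj (zmap' a ζ) = 2 * I * a / (1 - conj ζ) ^ 2 := by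
  simp [zmap', map_div₀, map_ofNat]

theorem zmap_sub_zmap_div_conj_zmap' {a : ℝ} (ha : a ≠ 0) {ζ ξ : ℂ} (hζ : ζ ≠ 1) (hξ : ξ ≠ 1) :
    (zmap a ζ - zmap a ξ) / conj (zmap' a ξ) =
      -(ζ - ξ) * (1 - conj ξ) ^ 2 / ((1 - ζ) * (1 - ξ)) := by
  have ha' : (a : ℂ) ≠ 0 := ofReal_ne_zero.mpr ha
  have hξ' : 1 - conj ξ ≠ 0 := by
    rwa [sub_ne_zero, ne_comm, Ne, map_eq_one_iff _ (RingHom.injective _)]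
  rw [zmap_sub_zmap a hζ hξ, conj_zmap']
  field_simp

theorem zmap_quotient_add_eq_of_norm_eq_one {a : ℝ} (ha : a ≠ 0) {α : ℝ} (hα0 : α ≠ 0)
    (hα1 : |α| ≠ 1) {σ : ℂ} (hσ : ‖σ‖ = 1) :
    (zmap a (σ / α) - zmap a (α * σ)) / conj (zmap' a (α * σ)) + ((1 - α ^ 2) * α : ℝ) * σ⁻¹ =
      (((1 - α ^ 2) ^ 2 : ℝ) : ℂ) / (1 - α * σ) := by
  have hσ0 : σ ≠ 0 := norm_ne_zero_iff.mp (by simp [hσ])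
  have hα : (α : ℂ) ≠ 0 := ofReal_ne_zero.mpr hα0
  have hσα : σ ≠ α := fun h => hα1 (by simpa [h] using hσ)
  have hασ : (α : ℂ) * σ ≠ 1 := fun h => hα1 (by simpa [hσ] using congrArg norm h)
  have hσα' : σ / α ≠ 1 := fun h => hσα ((div_eq_one_iff_eq hα).mp h)
  have hconj : conj ((α : ℂ) * σ) = α / σ := by
    rw [map_mul, conj_ofReal, ← inv_eq_conj hσ, div_eq_mul_inv]
  rw [zmap_sub_zmap_div_conj_zmap' ha hσα' hασ, hconj]
  -- `field_simp` reorders the factor `α * σ` to `σ * α` before looking for this hypothesis.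
  have hσα_ne : 1 - σ * α ≠ 0 := sub_ne_zero.mpr (by rw [mul_comm]; exact hασ.symm)
  push_cast
  field_simp
  ring

end Verruijt

open Verruijt in
/-- Eq. (4.7): for `σ` on the unit circle, the series `Σ_{k≥0} (1 − α²)² α^k σ^k`
has sum `(z(σ/α) − z(ασ))/conj(z′(ασ)) + (1 − α²) α σ⁻¹`; equivalently, the Laurent
coefficients of `(z(α⁻¹σ) − z(ασ))/conj(z′(ασ))` are `e_{−1} = −(1 − α²)α`,
`e_k = (1 − α²)² α^k` for `k ≥ 0`, and `e_{−k} = 0` for `k ≥ 2`. -/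
theorem laurent_expansion_eq_4_7 (a : ℝ) (ha : 0 < a) (α : ℝ)
    (hα0 : 0 < α) (hα1 : α < 1) (σ : ℂ) (hσ : ‖σ‖ = 1) :
    HasSum (fun k : ℕ => (((1 - α ^ 2) ^ 2 * α ^ k : ℝ) : ℂ) * σ ^ k)
      ((zmap a (σ / (α : ℂ)) - zmap a ((α : ℂ) * σ)) /
          starRingEnd ℂ (zmap' a ((α : ℂ) * σ))
        + (((1 - α ^ 2) * α : ℝ) : ℂ) * σ⁻¹) := by
  have hα : |α| = α := abs_of_pos hα0
  have hnorm : ‖(α : ℂ) * σ‖ < 1 := by simpa [hσ, hα] using hα1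
  rw [zmap_quotient_add_eq_of_norm_eq_one ha.ne' hα0.ne' (hα.trans_ne hα1.ne) hσ,
    div_eq_mul_inv]
  exact ((hasSum_geometric_of_norm_lt_one hnorm).mul_left _).congr_fun fun k => by
    push_cast
    ring
end
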